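/- Let n ≥ 1, let λ, ν ∈ ℝ with λ + ν ≠ 0, set η_{(λ,ν)}(r) = (e^{(λ+ν)r} − 1)/(λ+ν), and let M = ℝⁿ × ℝⁿ × ℝ. Define the operator V_Θ on complex-valued functions on M × M by (V_Θξ)(x,y,r;x',y',r') = e^{−n(λ+ν)r'/2}·exp(−2πi·η_{(λ,ν)}(r')·⟨e^{−λr'}x, y' − e^{−νr'}y⟩)·ξ(e^{−λr'}x, e^{−νr'}y, r+r'; x'−e^{−λr'}x, y'−e^{−νr'}y, r'). Then V_Θ satisfies the pentagon equation: (V_Θ)₁₂ ∘ (V_Θ)₁₃ ∘ (V_Θ)₂₃ = (V_Θ)₂₃ ∘ (V_Θ)₁₂ as operators on complex-valued functions on M × M × M. -/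
import Mathlib


open scoped BigOperators

noncomputable section

/-- `M = ℝⁿ × ℝⁿ × ℝ`, with coordinates `(x,y,r)`. -/
abbrev M (n : ℕ) : Type := (Fin n → ℝ) × (Fin n → ℝ) × ℝ

/-- `η_{(λ,ν)}(r) = (e^{(λ+ν)r} − 1)/(λ+ν)`. -/
def etaMix (lam nu r : ℝ) : ℝ := (Real.exp ((lam + nu) * r) - 1) / (lam + nu)

/-- The operator `V_Θ` on functions on `M × M` (the ``mixed'' case):
`(V_Θξ)(x,y,r;x',y',r') = e^{−n(λ+ν)r'/2}·exp(−2πi·η_{(λ,ν)}(r')·⟨e^{−λr'}x, y'−e^{−νr'}y⟩)·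
ξ(e^{−λr'}x, e^{−νr'}y, r+r'; x'−e^{−λr'}x, y'−e^{−νr'}y, r')`. -/
def Vmix (n : ℕ) (lam nu : ℝ) (ξ : M n × M n → ℂ) : M n × M n → ℂ := fun v =>
  let x := v.1.1; let y := v.1.2.1; let r := v.1.2.2
  let x' := v.2.1; let y' := v.2.2.1; let r' := v.2.2.2
  (Real.exp (-((n : ℝ) * (lam + nu) * r' / 2)) : ℂ)
    * Complex.exp (-(2 * Real.pi * Complex.I) * (etaMix lam nu r' : ℂ)
        * ((∑ i, (Real.exp (-(lam * r')) * x i) * (y' i - Real.exp (-(nu * r')) * y i) : ℝ) : ℂ))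
    * ξ ((Real.exp (-(lam * r')) • x, Real.exp (-(nu * r')) • y, r + r'),
         (x' - Real.exp (-(lam * r')) • x, y' - Real.exp (-(nu * r')) • y, r'))

/-- The leg operator `W₁₂` on functions on `M × M × M`. -/
def leg12 {n : ℕ} (W : (M n × M n → ℂ) → (M n × M n → ℂ)) :
    (M n × M n × M n → ℂ) → (M n × M n × M n → ℂ) := fun ξ p =>
  W (fun q => ξ (q.1, q.2, p.2.2)) (p.1, p.2.1)

/-- The leg operator `W₁₃` on functions on `M × M × M`. -/
def leg13 {n : ℕ} (W : (M n × M n → ℂ) → (M n × M n → ℂ)) :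
    (M n × M n × M n → ℂ) → (M n × M n × M n → ℂ) := fun ξ p =>
  W (fun q => ξ (q.1, p.2.1, q.2)) (p.1, p.2.2)

/-- The leg operator `W₂₃` on functions on `M × M × M`. -/
def leg23 {n : ℕ} (W : (M n × M n → ℂ) → (M n × M n → ℂ)) :
    (M n × M n × M n → ℂ) → (M n × M n × M n → ℂ) := fun ξ p =>
  W (fun q => ξ (p.1, q.1, q.2)) (p.2.1, p.2.2)

/-- For `λ + ν ≠ 0`, `V_Θ` satisfies the pentagon equation
`(V_Θ)₁₂ (V_Θ)₁₃ (V_Θ)₂₃ = (V_Θ)₂₃ (V_Θ)₁₂`. -/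
theorem Vmix_pentagon (n : ℕ) (hn : 1 ≤ n) (lam nu : ℝ) (hln : lam + nu ≠ 0) :
    leg12 (Vmix n lam nu) ∘ leg13 (Vmix n lam nu) ∘ leg23 (Vmix n lam nu)
      = leg23 (Vmix n lam nu) ∘ leg12 (Vmix n lam nu) := by
  funext ξ p
  obtain ⟨⟨x1,y1,r1⟩,⟨x2,y2,r2⟩,⟨x3,y3,r3⟩⟩ := p
  simp only [Function.comp_apply, leg12, leg13, leg23, Vmix]
  have hel : Real.exp (-(lam * (r2 + r3))) = Real.exp (-(lam * r3)) * Real.exp (-(lam * r2)) := by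
    rw [← Real.exp_add]; ring_nf
  have hen : Real.exp (-(nu * (r2 + r3))) = Real.exp (-(nu * r3)) * Real.exp (-(nu * r2)) := by
    rw [← Real.exp_add]; ring_nf
  have hcomb : ∀ (a b t : ℂ), Complex.exp a * (Complex.exp b * t) = Complex.exp (a + b) * t := by
    intros a b t; rw [← mul_assoc, ← Complex.exp_add]
  rw [hel, hen]
  simp only [mul_smul, smul_sub, sub_sub_sub_cancel_right, add_assoc, Pi.smul_apply,
    Pi.sub_apply, smul_eq_mul, Complex.ofReal_exp, mul_assoc, hcomb]
  congr 2
  have hsum :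
      etaMix lam nu r2 * (∑ x : Fin n, Real.exp (-(lam * r2)) * (x1 x * (y2 x - Real.exp (-(nu * r2)) * y1 x)))
      + etaMix lam nu r3 * (∑ x : Fin n, Real.exp (-(lam * r3)) * (Real.exp (-(lam * r2)) *
            (x1 x * (y3 x - Real.exp (-(nu * r3)) * (Real.exp (-(nu * r2)) * y1 x)))))
      + etaMix lam nu r3 * (∑ x : Fin n, Real.exp (-(lam * r3)) *
            ((x2 x - Real.exp (-(lam * r2)) * x1 x) *
              (y3 x - Real.exp (-(nu * r3)) * (Real.exp (-(nu * r2)) * y1 x) -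
                Real.exp (-(nu * r3)) * (y2 x - Real.exp (-(nu * r2)) * y1 x))))
      = etaMix lam nu r3 * (∑ x : Fin n, Real.exp (-(lam * r3)) * (x2 x * (y3 x - Real.exp (-(nu * r3)) * y2 x)))
      + etaMix lam nu (r2 + r3) * (∑ x : Fin n, Real.exp (-(lam * r3)) * (Real.exp (-(lam * r2)) *
            (x1 x * (Real.exp (-(nu * r3)) * y2 x - Real.exp (-(nu * r3)) * (Real.exp (-(nu * r2)) * y1 x))))) := by
    simp only [Finset.mul_sum, ← Finset.sum_add_distrib]
    refine Finset.sum_congr rfl fun i _ => ?_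
    have e1 : Real.exp ((lam + nu) * r2) = Real.exp (lam * r2) * Real.exp (nu * r2) := by
      rw [← Real.exp_add]; ring_nf
    have e2 : Real.exp ((lam + nu) * r3) = Real.exp (lam * r3) * Real.exp (nu * r3) := by
      rw [← Real.exp_add]; ring_nf
    have e3 : Real.exp ((lam + nu) * (r2 + r3))
        = Real.exp (lam * r2) * Real.exp (nu * r2) * (Real.exp (lam * r3) * Real.exp (nu * r3)) := by
      rw [← Real.exp_add, ← Real.exp_add, ← Real.exp_add]; ring_nf
    simp only [etaMix, e1, e2, e3, Real.exp_neg]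
    field_simp
    ring
  have hc := congrArg (Complex.ofReal) hsum
  push_cast at hc ⊢
  linear_combination (-(2 * (Real.pi : ℂ) * Complex.I)) * hc

end
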